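/- arXiv:1910.05045 — 4 statements merged into one kernel-verified Lean document; each statement's English description precedes it below -/
import Mathlib

section
/- The permutation of {0,1,...,2n+1} determined by the Jones matching M(T) of a rooted planar ternary tree T with n internal vertices (the permutation swapping the two elements of each pair of M(T)) is a fixed-point-free involution that is a product of n+1 disjoint transpositions. -/
inductive TernaryTree : Type
  | leaf : TernaryTree
  | node : TernaryTree → TernaryTree → TernaryTree → TernaryTree

namespace TernaryTree

/-- number of leaves -/
def numLeaves : TernaryTree → ℕ
  | leaf => 1
  | node a b c => a.numLeaves + b.numLeaves + c.numLeaves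

/-- number of internal (3-ary branching) vertices -/
def numInternal : TernaryTree → ℕ
  | leaf => 0
  | node a b c => a.numInternal + b.numInternal + c.numInternal + 1

/-- the distinguished leaf `f` of a tree whose leaves are labelled `o+1, …, o + numLeaves` -/
def distLeaf : ℕ → TernaryTree → ℕ
  | o, leaf => o + 1
  | o, node a b _ => distLeaf (o + a.numLeaves) b

/-- the matching `M'` of a tree whose leaves are labelled `o+1, …, o + numLeaves` -/
def matchAux : ℕ → TernaryTree → Finset (Finset ℕ)
  | _, leaf => ∅
  | o, node a b c =>
      matchAux o a ∪ matchAux (o + a.numLeaves) b ∪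
        matchAux (o + a.numLeaves + b.numLeaves) c ∪
        {({distLeaf o a, distLeaf (o + a.numLeaves + b.numLeaves) c} : Finset ℕ)}

/-- the Jones matching `M(T) = M'(T) ∪ {{0, f(T)}}` -/
def jonesMatching (T : TernaryTree) : Finset (Finset ℕ) :=
  matchAux 0 T ∪ {({0, distLeaf 0 T} : Finset ℕ)}

end TernaryTree

open TernaryTree

lemma numLeaves_eq (T : TernaryTree) : T.numLeaves = 2 * T.numInternal + 1 := by
  induction T with
  | leaf => rfl
  | node a b c ha hb hc => simp [numLeaves, numInternal]; omega

lemma distLeaf_bounds (T : TernaryTree) : ∀ o : ℕ, o < distLeaf o T ∧ distLeaf o T ≤ o + T.numLeaves := by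
  induction T with
  | leaf => intro o; simp [distLeaf, numLeaves]
  | node a b c ha hb hc =>
      intro o
      have h1 := hb (o + a.numLeaves)
      have h2 := numLeaves_eq a
      have h3 := numLeaves_eq c
      simp only [distLeaf, numLeaves]
      omega

lemma matchAux_props (T : TernaryTree) : ∀ o : ℕ,
    (∀ e ∈ matchAux o T, ∀ z ∈ e, o < z ∧ z ≤ o + T.numLeaves ∧ z ≠ distLeaf o T) ∧
    (∀ z, o < z → z ≤ o + T.numLeaves → z ≠ distLeaf o T → ∃ e ∈ matchAux o T, z ∈ e) ∧
    (∀ e ∈ matchAux o T, ∀ f ∈ matchAux o T, e ≠ f → Disjoint e f) ∧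
    (∀ e ∈ matchAux o T, ∃ x y, x ≠ y ∧ e = {x, y}) ∧
    (matchAux o T).card = T.numInternal := by
  induction T with
  | leaf =>
      intro o
      refine ⟨by simp [matchAux], ?_, by simp [matchAux], by simp [matchAux], by simp [matchAux, numInternal]⟩
      intro z h1 h2 h3
      simp [numLeaves] at h2
      simp [distLeaf] at h3
      omega
  | node a b c ha hb hc =>
      intro o
      obtain ⟨ha1, ha2, ha3, ha4, ha5⟩ := ha o
      obtain ⟨hb1, hb2, hb3, hb4, hb5⟩ := hb (o + a.numLeaves)
      obtain ⟨hc1, hc2, hc3, hc4, hc5⟩ := hc (o + a.numLeaves + b.numLeaves)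
      set da := distLeaf o a with hda
      set db := distLeaf (o + a.numLeaves) b with hdb
      set dc := distLeaf (o + a.numLeaves + b.numLeaves) c with hdc
      have hdab := distLeaf_bounds a o
      have hdbb := distLeaf_bounds b (o + a.numLeaves)
      have hdcb := distLeaf_bounds c (o + a.numLeaves + b.numLeaves)
      have hdL : distLeaf o (node a b c) = db := rfl
      have hnl : (node a b c).numLeaves = a.numLeaves + b.numLeaves + c.numLeaves := rfl
      have hmem : ∀ e, e ∈ matchAux o (node a b c) ↔
          e ∈ matchAux o a ∨ e ∈ matchAux (o + a.numLeaves) b ∨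
          e ∈ matchAux (o + a.numLeaves + b.numLeaves) c ∨ e = ({da, dc} : Finset ℕ) := by
        intro e
        simp [matchAux, Finset.mem_union, or_assoc]
        rw [hda, hdc]; tauto
      -- bounds for members
      have bound : ∀ e ∈ matchAux o (node a b c), ∀ z ∈ e,
          o < z ∧ z ≤ o + (node a b c).numLeaves ∧ z ≠ db := by
        intro e he z hz
        rcases (hmem e).1 he with h | h | h | h
        · have := ha1 e h z hz; omega
        · have := hb1 e h z hz; omega
        · have := hc1 e h z hz; omega
        · subst h
          simp only [Finset.mem_insert, Finset.mem_singleton] at hz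
          rcases hz with rfl | rfl <;> omega
      refine ⟨by rw [hdL]; exact bound, ?_, ?_, ?_, ?_⟩
      · -- coverage
        rw [hdL, hnl]
        intro z h1 h2 h3
        by_cases hz1 : z ≤ o + a.numLeaves
        · by_cases hz2 : z = da
          · exact ⟨{da, dc}, (hmem _).2 (Or.inr (Or.inr (Or.inr rfl))), by simp [hz2]⟩
          · obtain ⟨e, he, hze⟩ := ha2 z h1 hz1 hz2
            exact ⟨e, (hmem e).2 (Or.inl he), hze⟩
        · by_cases hz3 : z ≤ o + a.numLeaves + b.numLeaves
          · obtain ⟨e, he, hze⟩ := hb2 z (by omega) (by omega) h3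
            exact ⟨e, (hmem e).2 (Or.inr (Or.inl he)), hze⟩
          · by_cases hz4 : z = dc
            · exact ⟨{da, dc}, (hmem _).2 (Or.inr (Or.inr (Or.inr rfl))), by simp [hz4]⟩
            · obtain ⟨e, he, hze⟩ := hc2 z (by omega) (by omega) hz4
              exact ⟨e, (hmem e).2 (Or.inr (Or.inr (Or.inl he))), hze⟩
      · -- pairwise disjoint
        intro e he f hf hef
        rw [Finset.disjoint_left]
        intro z hze hzf
        rcases (hmem e).1 he with h1 | h1 | h1 | h1 <;>
          rcases (hmem f).1 hf with h2 | h2 | h2 | h2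
        · exact Finset.disjoint_left.1 (ha3 e h1 f h2 hef) hze hzf
        · have u := ha1 e h1 z hze; have v := hb1 f h2 z hzf; omega
        · have u := ha1 e h1 z hze; have v := hc1 f h2 z hzf; omega
        · subst h2
          have u := ha1 e h1 z hze
          simp only [Finset.mem_insert, Finset.mem_singleton] at hzf
          rcases hzf with rfl | rfl
          · exact u.2.2 rfl
          · omega
        · have u := hb1 e h1 z hze; have v := ha1 f h2 z hzf; omega
        · exact Finset.disjoint_left.1 (hb3 e h1 f h2 hef) hze hzf
        · have u := hb1 e h1 z hze; have v := hc1 f h2 z hzf; omega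
        · subst h2
          have u := hb1 e h1 z hze
          simp only [Finset.mem_insert, Finset.mem_singleton] at hzf
          rcases hzf with rfl | rfl <;> omega
        · have u := hc1 e h1 z hze; have v := ha1 f h2 z hzf; omega
        · have u := hc1 e h1 z hze; have v := hb1 f h2 z hzf; omega
        · exact Finset.disjoint_left.1 (hc3 e h1 f h2 hef) hze hzf
        · subst h2
          have u := hc1 e h1 z hze
          simp only [Finset.mem_insert, Finset.mem_singleton] at hzf
          rcases hzf with rfl | rfl
          · omega
          · exact u.2.2 rfl
        · subst h1
          have v := ha1 f h2 z hzf
          simp only [Finset.mem_insert, Finset.mem_singleton] at hze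
          rcases hze with rfl | rfl
          · exact v.2.2 rfl
          · omega
        · subst h1
          have v := hb1 f h2 z hzf
          simp only [Finset.mem_insert, Finset.mem_singleton] at hze
          rcases hze with rfl | rfl <;> omega
        · subst h1
          have v := hc1 f h2 z hzf
          simp only [Finset.mem_insert, Finset.mem_singleton] at hze
          rcases hze with rfl | rfl
          · omega
          · exact v.2.2 rfl
        · exact absurd (h1.trans h2.symm) hef
      · -- pairs
        intro e he
        rcases (hmem e).1 he with h | h | h | h
        · exact ha4 e h
        · exact hb4 e h
        · exact hc4 e h
        · exact ⟨da, dc, by omega, h⟩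
      · -- card
        have hAB : Disjoint (matchAux o a) (matchAux (o + a.numLeaves) b) := by
          rw [Finset.disjoint_left]
          intro e h1 h2
          obtain ⟨x, y, hxy, rfl⟩ := ha4 e h1
          have u := ha1 _ h1 x (by simp)
          have v := hb1 _ h2 x (by simp)
          omega
        have hAC : Disjoint (matchAux o a) (matchAux (o + a.numLeaves + b.numLeaves) c) := by
          rw [Finset.disjoint_left]
          intro e h1 h2
          obtain ⟨x, y, hxy, rfl⟩ := ha4 e h1
          have u := ha1 _ h1 x (by simp)
          have v := hc1 _ h2 x (by simp)
          omega
        have hBC : Disjoint (matchAux (o + a.numLeaves) b) (matchAux (o + a.numLeaves + b.numLeaves) c) := by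
          rw [Finset.disjoint_left]
          intro e h1 h2
          obtain ⟨x, y, hxy, rfl⟩ := hb4 e h1
          have u := hb1 _ h1 x (by simp)
          have v := hc1 _ h2 x (by simp)
          omega
        have he0 : ({da, dc} : Finset ℕ) ∉
            matchAux o a ∪ matchAux (o + a.numLeaves) b ∪ matchAux (o + a.numLeaves + b.numLeaves) c := by
          intro h
          simp only [Finset.mem_union] at h
          rcases h with (h | h) | h
          · have := ha1 _ h dc (by simp); omega
          · have := hb1 _ h dc (by simp); omega
          · have := hc1 _ h da (by simp); omega
        show (matchAux o a ∪ matchAux (o + a.numLeaves) b ∪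
            matchAux (o + a.numLeaves + b.numLeaves) c ∪ {({da, dc} : Finset ℕ)}).card
            = (node a b c).numInternal
        rw [Finset.card_union_of_disjoint (by simpa using he0),
            Finset.card_union_of_disjoint (Finset.disjoint_union_left.mpr ⟨hAC, hBC⟩),
            Finset.card_union_of_disjoint hAB, ha5, hb5, hc5]
        simp [numInternal]

lemma jones_props (T : TernaryTree) :
    (∀ e ∈ T.jonesMatching, ∃ x y, x ≠ y ∧ e = {x, y}) ∧
    (∀ z, z ≤ T.numLeaves → ∃ e ∈ T.jonesMatching, z ∈ e) ∧
    (∀ e ∈ T.jonesMatching, ∀ f ∈ T.jonesMatching, e ≠ f → Disjoint e f) ∧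
    T.jonesMatching.card = T.numInternal + 1 := by
  obtain ⟨h1, h2, h3, h4, h5⟩ := matchAux_props T 0
  have hd := distLeaf_bounds T 0
  have hmem : ∀ e, e ∈ T.jonesMatching ↔
      e ∈ TernaryTree.matchAux 0 T ∨ e = ({0, TernaryTree.distLeaf 0 T} : Finset ℕ) := by
    intro e; simp [TernaryTree.jonesMatching]; tauto
  refine ⟨?_, ?_, ?_, ?_⟩
  · intro e he
    rcases (hmem e).1 he with h | h
    · exact h4 e h
    · exact ⟨0, TernaryTree.distLeaf 0 T, by omega, h⟩
  · intro z hz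
    by_cases h0 : z = 0
    · exact ⟨_, (hmem _).2 (Or.inr rfl), by simp [h0]⟩
    by_cases hdz : z = TernaryTree.distLeaf 0 T
    · exact ⟨_, (hmem _).2 (Or.inr rfl), by simp [hdz]⟩
    obtain ⟨e, he, hze⟩ := h2 z (by omega) (by omega) hdz
    exact ⟨e, (hmem e).2 (Or.inl he), hze⟩
  · intro e he f hf hef
    rw [Finset.disjoint_left]
    intro z hze hzf
    rcases (hmem e).1 he with he' | he' <;> rcases (hmem f).1 hf with hf' | hf'
    · exact Finset.disjoint_left.1 (h3 e he' f hf' hef) hze hzf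
    · subst hf'
      have u := h1 e he' z hze
      simp only [Finset.mem_insert, Finset.mem_singleton] at hzf
      rcases hzf with rfl | rfl
      · omega
      · exact u.2.2 rfl
    · subst he'
      have u := h1 f hf' z hzf
      simp only [Finset.mem_insert, Finset.mem_singleton] at hze
      rcases hze with rfl | rfl
      · omega
      · exact u.2.2 rfl
    · exact absurd (he'.trans hf'.symm) hef
  · have h0 : ({0, TernaryTree.distLeaf 0 T} : Finset ℕ) ∉ TernaryTree.matchAux 0 T := by
      intro h
      have := h1 _ h 0 (by simp)
      omega
    rw [TernaryTree.jonesMatching, Finset.card_union_of_disjoint (by simpa using h0), h5]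
    simp

lemma exists_swap_list (S : Finset (Finset ℕ))
    (hpair : ∀ e ∈ S, ∃ x y, x ≠ y ∧ e = {x, y})
    (hdisj : ∀ e ∈ S, ∀ f ∈ S, e ≠ f → Disjoint e f)
    (p : Equiv.Perm ℕ)
    (hswap : ∀ e ∈ S, ∀ x ∈ e, p x ∈ e ∧ p x ≠ x)
    (hfix : ∀ x, (∀ e ∈ S, x ∉ e) → p x = x) :
    ∃ l : List (Equiv.Perm ℕ), l.length = S.card ∧ (∀ q ∈ l, q.IsSwap) ∧
      l.Pairwise Equiv.Perm.Disjoint ∧ l.prod = p ∧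
      (∀ q ∈ l, ∀ z, q z ≠ z → ∃ e ∈ S, z ∈ e) := by
  induction S using Finset.induction_on generalizing p with
  | empty =>
      refine ⟨[], rfl, by simp, by simp, ?_, by simp⟩
      simp only [List.prod_nil]
      ext z
      simp [hfix z (by simp)]
  | insert e S he ih =>
      obtain ⟨x, y, hxy, hexy⟩ := hpair e (Finset.mem_insert_self e S)
      have hxe : x ∈ e := by rw [hexy]; simp
      have hye : y ∈ e := by rw [hexy]; simp
      have hpx : p x = y := by
        obtain ⟨h1, h2⟩ := hswap e (Finset.mem_insert_self e S) x hxe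
        rw [hexy] at h1
        simp only [Finset.mem_insert, Finset.mem_singleton] at h1
        tauto
      have hpy : p y = x := by
        obtain ⟨h1, h2⟩ := hswap e (Finset.mem_insert_self e S) y hye
        rw [hexy] at h1
        simp only [Finset.mem_insert, Finset.mem_singleton] at h1
        tauto
      -- disjointness of e from members of S
      have hde : ∀ f ∈ S, ∀ z ∈ e, z ∉ f := by
        intro f hf z hz
        have hef : e ≠ f := by rintro rfl; exact he hf
        exact Finset.disjoint_left.1
          (hdisj e (Finset.mem_insert_self e S) f (Finset.mem_insert_of_mem hf) hef) hz
      set p' : Equiv.Perm ℕ := Equiv.swap x y * p with hp'def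
      have hp'app : ∀ z, p' z = Equiv.swap x y (p z) := fun z => rfl
      have hswap' : ∀ f ∈ S, ∀ z ∈ f, p' z ∈ f ∧ p' z ≠ z := by
        intro f hf z hz
        obtain ⟨h1, h2⟩ := hswap f (Finset.mem_insert_of_mem hf) z hz
        have hx : p z ≠ x := fun h => hde f hf x hxe (h ▸ h1)
        have hy : p z ≠ y := fun h => hde f hf y hye (h ▸ h1)
        rw [hp'app, Equiv.swap_apply_of_ne_of_ne hx hy]
        exact ⟨h1, h2⟩
      have hfix' : ∀ z, (∀ f ∈ S, z ∉ f) → p' z = z := by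
        intro z hz
        by_cases hze : z ∈ e
        · rw [hexy] at hze
          simp only [Finset.mem_insert, Finset.mem_singleton] at hze
          rcases hze with rfl | rfl
          · rw [hp'app, hpx, Equiv.swap_apply_right]
          · rw [hp'app, hpy, Equiv.swap_apply_left]
        · have : p z = z := by
            apply hfix
            intro f hf
            rcases Finset.mem_insert.1 hf with rfl | hf'
            · exact hze
            · exact hz f hf'
          rw [hp'app, this, Equiv.swap_apply_of_ne_of_ne
            (fun h => hze (by rw [h]; exact hxe)) (fun h => hze (by rw [h]; exact hye))]
      obtain ⟨l', hl1, hl2, hl3, hl4, hl5⟩ := ih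
        (fun f hf => hpair f (Finset.mem_insert_of_mem hf))
        (fun f hf g hg => hdisj f (Finset.mem_insert_of_mem hf) g (Finset.mem_insert_of_mem hg))
        p' hswap' hfix'
      refine ⟨Equiv.swap x y :: l', ?_, ?_, ?_, ?_, ?_⟩
      · simp [Finset.card_insert_of_notMem he, hl1]
      · intro q hq
        rcases List.mem_cons.1 hq with rfl | hq'
        · exact ⟨x, y, hxy, rfl⟩
        · exact hl2 q hq'
      · refine List.pairwise_cons.2 ⟨?_, hl3⟩
        intro q hq
        intro z
        by_cases hqz : q z = z
        · right; exact hqz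
        · left
          obtain ⟨f, hf, hzf⟩ := hl5 q hq z hqz
          exact Equiv.swap_apply_of_ne_of_ne
            (fun h => hde f hf x hxe (h ▸ hzf)) (fun h => hde f hf y hye (h ▸ hzf))
      · rw [List.prod_cons, hl4, hp'def, ← mul_assoc, Equiv.swap_mul_self, one_mul]
      · intro q hq z hqz
        rcases List.mem_cons.1 hq with rfl | hq'
        · have : z = x ∨ z = y := by
            by_contra h
            push_neg at h
            exact hqz (Equiv.swap_apply_of_ne_of_ne h.1 h.2)
          refine ⟨e, Finset.mem_insert_self e S, ?_⟩
          rcases this with rfl | rfl <;> assumption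
        · obtain ⟨f, hf, hzf⟩ := hl5 q hq' z hqz
          exact ⟨f, Finset.mem_insert_of_mem hf, hzf⟩

theorem tangledPermutation_involution (T : TernaryTree) (n : ℕ)
    (hn : T.numInternal = n) (p : Equiv.Perm ℕ)
    (hp : ∀ x y : ℕ, x ≠ y → (p x = y ↔ ({x, y} : Finset ℕ) ∈ T.jonesMatching))
    (hp' : ∀ x : ℕ, (∀ e ∈ T.jonesMatching, x ∉ e) → p x = x) :
    p * p = 1 ∧ (∀ x ∈ Finset.range (2 * n + 2), p x ≠ x) ∧
    ∃ l : List (Equiv.Perm ℕ), l.length = n + 1 ∧ (∀ q ∈ l, q.IsSwap) ∧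
      l.Pairwise Equiv.Perm.Disjoint ∧ l.prod = p := by
  obtain ⟨j1, j2, j3, j4⟩ := jones_props T
  have hnl : T.numLeaves = 2 * n + 1 := by rw [numLeaves_eq, hn]
  have pe : ∀ e ∈ T.jonesMatching, ∀ x ∈ e, p x ∈ e ∧ p x ≠ x := by
    intro e he x hx
    obtain ⟨u, v, huv, rfl⟩ := j1 e he
    simp only [Finset.mem_insert, Finset.mem_singleton] at hx
    rcases hx with rfl | rfl
    · have h := (hp x v huv).2 he
      rw [h]
      exact ⟨by simp, Ne.symm huv⟩
    · have h := (hp x u (Ne.symm huv)).2 (by rwa [Finset.pair_comm])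
      rw [h]
      exact ⟨by simp, huv⟩
  refine ⟨?_, ?_, ?_⟩
  · ext z
    simp only [Equiv.Perm.mul_apply, Equiv.Perm.one_apply]
    by_cases hz : ∃ e ∈ T.jonesMatching, z ∈ e
    · obtain ⟨e, he, hze⟩ := hz
      obtain ⟨u, v, huv, rfl⟩ := j1 e he
      have hu : p u = v := (hp u v huv).2 he
      have hv : p v = u := (hp v u (Ne.symm huv)).2 (by rwa [Finset.pair_comm])
      simp only [Finset.mem_insert, Finset.mem_singleton] at hze
      rcases hze with rfl | rfl
      · rw [hu, hv]
      · rw [hv, hu]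
    · push_neg at hz
      rw [hp' z hz, hp' z hz]
  · intro x hx
    rw [Finset.mem_range] at hx
    obtain ⟨e, he, hxe⟩ := j2 x (by omega)
    exact (pe e he x hxe).2
  · obtain ⟨l, hl1, hl2, hl3, hl4, _⟩ :=
      exists_swap_list T.jonesMatching j1 j3 p pe hp'
    exact ⟨l, by rw [hl1, j4, hn], hl2, hl3, hl4⟩
end

section
/- For every rooted planar ternary tree T with n ≥ 1 internal vertices, every pair of the Jones matching M(T) crosses at least one other pair; that is, for each pair {a,c} ∈ M(T) with a < c there exists a pair {b,d} ∈ M(T) with b < d, {b,d} ≠ {a,c}, and either a < b < c < d or b < a < d < c. -/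
namespace TernaryTree

lemma one_le_numLeaves : ∀ T : TernaryTree, 1 ≤ T.numLeaves
  | leaf => le_refl 1
  | node a b c => by
      have := one_le_numLeaves a
      simp [numLeaves]; omega

lemma distLeaf_gt : ∀ (T : TernaryTree) (o : ℕ), o < distLeaf o T
  | leaf, o => by simp [distLeaf]
  | node a b c, o => by
      have h := distLeaf_gt b (o + a.numLeaves)
      simp [distLeaf]; omega

lemma distLeaf_le : ∀ (T : TernaryTree) (o : ℕ), distLeaf o T ≤ o + T.numLeaves
  | leaf, o => by simp [distLeaf, numLeaves]
  | node a b c, o => by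
      have h := distLeaf_le b (o + a.numLeaves)
      have := one_le_numLeaves c
      simp [distLeaf, numLeaves]; omega

lemma matchAux_bounds : ∀ (T : TernaryTree) (o : ℕ) (p : Finset ℕ),
    p ∈ matchAux o T → ∀ x ∈ p, o < x ∧ x ≤ o + T.numLeaves
  | leaf, o, p => by simp [matchAux]
  | node a b c, o, p => by
      intro hp x hx
      have hna := one_le_numLeaves a
      have hnb := one_le_numLeaves b
      have hnc := one_le_numLeaves c
      simp only [matchAux, Finset.mem_union, Finset.mem_singleton] at hp
      rcases hp with (((h | h) | h) | h)
      · have := matchAux_bounds a o p h x hx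
        simp [numLeaves]; omega
      · have := matchAux_bounds b (o + a.numLeaves) p h x hx
        simp [numLeaves]; omega
      · have := matchAux_bounds c (o + a.numLeaves + b.numLeaves) p h x hx
        simp [numLeaves]; omega
      · subst h
        have h1 := distLeaf_gt a o
        have h2 := distLeaf_le a o
        have h3 := distLeaf_gt c (o + a.numLeaves + b.numLeaves)
        have h4 := distLeaf_le c (o + a.numLeaves + b.numLeaves)
        simp only [Finset.mem_insert, Finset.mem_singleton] at hx
        rcases hx with rfl | rfl <;> simp [numLeaves] <;> omega

end TernaryTree

namespace TernaryTree

lemma pair_eq_elim {a c fa fc : ℕ} (hac : a < c) (hf : fa < fc)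
    (h : ({a, c} : Finset ℕ) = ({fa, fc} : Finset ℕ)) : a = fa ∧ c = fc := by
  have ha : a ∈ ({fa, fc} : Finset ℕ) := h ▸ Finset.mem_insert_self a {c}
  have hc : c ∈ ({fa, fc} : Finset ℕ) := by
    rw [← h]; simp
  simp only [Finset.mem_insert, Finset.mem_singleton] at ha hc
  omega

lemma key : ∀ (T : TernaryTree) (o a c : ℕ), a < c →
    ({a, c} : Finset ℕ) ∈ matchAux o T →
    (∃ b d, b < d ∧ ({b, d} : Finset ℕ) ∈ matchAux o T ∧
        ({b, d} : Finset ℕ) ≠ ({a, c} : Finset ℕ) ∧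
        ((a < b ∧ b < c ∧ c < d) ∨ (b < a ∧ a < d ∧ d < c))) ∨
    (a < distLeaf o T ∧ distLeaf o T < c)
  | leaf, o, a, c => by simp [matchAux]
  | node A B C, o, a, c => by
      intro hac hp
      set fA := distLeaf o A with hfA
      set fC := distLeaf (o + A.numLeaves + B.numLeaves) C with hfC
      have hA1 := distLeaf_gt A o
      have hA2 := distLeaf_le A o
      have hC1 := distLeaf_gt C (o + A.numLeaves + B.numLeaves)
      have hC2 := distLeaf_le C (o + A.numLeaves + B.numLeaves)
      have hB1 := distLeaf_gt B (o + A.numLeaves)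
      have hB2 := distLeaf_le B (o + A.numLeaves)
      have hfAC : fA < fC := by omega
      have hqmem : ({fA, fC} : Finset ℕ) ∈ matchAux o (node A B C) := by
        simp [matchAux, hfA, hfC]
      have hdist : distLeaf o (node A B C) = distLeaf (o + A.numLeaves) B := rfl
      simp only [matchAux, Finset.mem_union, Finset.mem_singleton] at hp
      rcases hp with (((h | h) | h) | h)
      · -- in A
        have hbnd := matchAux_bounds A o _ h
        have hca : c ≤ o + A.numLeaves := (hbnd c (by simp)).2
        rcases key A o a c hac h with ⟨b, d, hbd, hm, hne, hcr⟩ | ⟨h1, h2⟩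
        · exact Or.inl ⟨b, d, hbd, by simp [matchAux, hm], hne, hcr⟩
        · refine Or.inl ⟨fA, fC, hfAC, hqmem, ?_, Or.inl ⟨h1, h2, by omega⟩⟩
          intro heq
          have : fC ∈ ({a, c} : Finset ℕ) := by rw [← heq]; simp
          simp only [Finset.mem_insert, Finset.mem_singleton] at this
          omega
      · -- in B
        rcases key B (o + A.numLeaves) a c hac h with ⟨b, d, hbd, hm, hne, hcr⟩ | ⟨h1, h2⟩
        · exact Or.inl ⟨b, d, hbd, by simp [matchAux, hm], hne, hcr⟩
        · exact Or.inr (by rw [hdist]; exact ⟨h1, h2⟩)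
      · -- in C
        have hbnd := matchAux_bounds C (o + A.numLeaves + B.numLeaves) _ h
        have hca : o + A.numLeaves + B.numLeaves < a := (hbnd a (by simp)).1
        rcases key C (o + A.numLeaves + B.numLeaves) a c hac h with
          ⟨b, d, hbd, hm, hne, hcr⟩ | ⟨h1, h2⟩
        · exact Or.inl ⟨b, d, hbd, by simp [matchAux, hm], hne, hcr⟩
        · refine Or.inl ⟨fA, fC, hfAC, hqmem, ?_, Or.inr ⟨by omega, h1, h2⟩⟩
          intro heq
          have : fA ∈ ({a, c} : Finset ℕ) := by rw [← heq]; simp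
          simp only [Finset.mem_insert, Finset.mem_singleton] at this
          omega
      · -- the node pair itself
        obtain ⟨rfl, rfl⟩ := pair_eq_elim hac hfAC h
        exact Or.inr (by rw [hdist]; constructor <;> omega)

end TernaryTree

theorem jonesMatching_every_pair_crosses (T : TernaryTree) (n : ℕ)
    (hn : T.numInternal = n) (hn1 : 1 ≤ n) :
    ∀ a c : ℕ, a < c → ({a, c} : Finset ℕ) ∈ T.jonesMatching →
      ∃ b d : ℕ, b < d ∧ ({b, d} : Finset ℕ) ∈ T.jonesMatching ∧
        ({b, d} : Finset ℕ) ≠ ({a, c} : Finset ℕ) ∧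
        ((a < b ∧ b < c ∧ c < d) ∨ (b < a ∧ a < d ∧ d < c)) := by
  intro a c hac hmem
  open TernaryTree in
  have hf1 := TernaryTree.distLeaf_gt T 0
  simp only [TernaryTree.jonesMatching, Finset.mem_union, Finset.mem_singleton] at hmem
  rcases hmem with h | h
  · rcases TernaryTree.key T 0 a c hac h with ⟨b, d, hbd, hm, hne, hcr⟩ | ⟨h1, h2⟩
    · exact ⟨b, d, hbd, by simp [TernaryTree.jonesMatching, hm], hne, hcr⟩
    · have ha0 := (TernaryTree.matchAux_bounds T 0 _ h a (by simp)).1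
      refine ⟨0, TernaryTree.distLeaf 0 T, hf1, ?_, ?_, Or.inr ⟨ha0, h1, h2⟩⟩
      · simp [TernaryTree.jonesMatching]
      · intro heq
        have : a ∈ ({0, TernaryTree.distLeaf 0 T} : Finset ℕ) := by rw [heq]; simp
        simp only [Finset.mem_insert, Finset.mem_singleton] at this
        omega
  · -- {a,c} = {0, f T}
    obtain ⟨rfl, rfl⟩ := TernaryTree.pair_eq_elim hac hf1 h
    match T, hn with
    | TernaryTree.leaf, hn => simp [TernaryTree.numInternal] at hn; omega
    | TernaryTree.node A B C, hn =>
      have hA1 := TernaryTree.distLeaf_gt A 0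
      have hA2 := TernaryTree.distLeaf_le A 0
      have hC1 := TernaryTree.distLeaf_gt C (0 + A.numLeaves + B.numLeaves)
      have hB1 := TernaryTree.distLeaf_gt B (0 + A.numLeaves)
      have hB2 := TernaryTree.distLeaf_le B (0 + A.numLeaves)
      have hdist : TernaryTree.distLeaf 0 (TernaryTree.node A B C)
          = TernaryTree.distLeaf (0 + A.numLeaves) B := rfl
      refine ⟨TernaryTree.distLeaf 0 A,
        TernaryTree.distLeaf (0 + A.numLeaves + B.numLeaves) C, by omega, ?_, ?_,
        Or.inl ⟨by omega, by rw [hdist]; omega, by rw [hdist]; omega⟩⟩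
      · simp [TernaryTree.jonesMatching, TernaryTree.matchAux]
      · intro heq
        have : (0 : ℕ) ∈ ({TernaryTree.distLeaf 0 A,
            TernaryTree.distLeaf (0 + A.numLeaves + B.numLeaves) C} : Finset ℕ) := by
          rw [heq]; simp
        simp only [Finset.mem_insert, Finset.mem_singleton] at this
        omega
end

section
/- The Jones matching of a rooted planar ternary tree avoids the pattern (a1,a4), (a2,a7), (a3,a6), (a5,a8): there are no integers a1 < a2 < a3 < a4 < a5 < a6 < a7 < a8 such that the four pairs {a1,a4}, {a5,a8}, {a2,a7}, {a3,a6} all belong to M(T). -/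
/-!
Write `M_o(T)` for `M'(T)` together with the root arc `{o, f(T)}`, the leaves being labelled
`o+1, …`. The arcs of `M_o(node a b c)` are the arcs of `M'` of the three subtrees, each inside
the block of leaves of its subtree, the root arc from `o` into the block of `b`, and the bridge
`{f(a), f(c)}`. Arcs of different subtrees do not cross, the root arc crosses only arcs of `b`
and the bridge, and the bridge only arcs of `a` and `c`. The crossing graph of either pattern
below is a 4-cycle, so an occurrence consists of arcs of one subtree and at most one root or
bridge arc. The root arc can then be replaced by the root arc `{o + |a|, f(b)}` of `b`, and a
bridge arc crossing arcs of `c` by the root arc of `c`. A bridge arc crossing arcs of `a` becomes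
the root arc `{o, f(a)}` of `a` only once its right end is moved to the front; this rotates the
pattern `(1,4), (2,7), (3,6), (5,8)` into `(1,6), (2,5), (3,8), (4,7)` and back, so the two are
excluded together by induction on the tree.
-/

theorem Finset.eq_and_eq_of_pair_eq_pair {α : Type*} [LinearOrder α] {x y p q : α}
    (hxy : x < y) (hpq : p < q) (h : ({x, y} : Finset α) = {p, q}) : x = p ∧ y = q := by
  have h' : ({x, y} : Set α) = {p, q} := by rw [← Finset.coe_pair, h, Finset.coe_pair]
  rcases Set.pair_eq_pair_iff.1 h' with h'' | ⟨rfl, rfl⟩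
  · exact h''
  · exact absurd hxy (lt_asymm hpq)

namespace TernaryTree

def rootedMatching (o : ℕ) (T : TernaryTree) : Finset (Finset ℕ) :=
  matchAux o T ∪ {({o, distLeaf o T} : Finset ℕ)}

theorem root_mem_rootedMatching (o : ℕ) (T : TernaryTree) :
    ({o, distLeaf o T} : Finset ℕ) ∈ rootedMatching o T :=
  Finset.mem_union_right _ (Finset.mem_singleton_self _)

theorem mem_rootedMatching_of_mem_matchAux {e : Finset ℕ} {o : ℕ} {T : TernaryTree}
    (h : e ∈ matchAux o T) : e ∈ rootedMatching o T :=
  Finset.mem_union_left _ h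

theorem distLeaf_mem_Ioc (o : ℕ) (T : TernaryTree) :
    distLeaf o T ∈ Finset.Ioc o (o + T.numLeaves) := by
  induction T generalizing o with
  | leaf => simp [distLeaf, numLeaves]
  | node a b c _ ihb _ =>
    have := Finset.mem_Ioc.1 (ihb (o + a.numLeaves))
    rw [Finset.mem_Ioc, distLeaf, numLeaves]
    omega

theorem mem_Ioc_of_mem_matchAux {o x : ℕ} {T : TernaryTree} {e : Finset ℕ}
    (he : e ∈ matchAux o T) (hx : x ∈ e) : x ∈ Finset.Ioc o (o + T.numLeaves) := by
  induction T generalizing o e with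
  | leaf => simp [matchAux] at he
  | node a b c iha ihb ihc =>
    simp only [matchAux, Finset.mem_union, Finset.mem_singleton] at he
    rw [Finset.mem_Ioc, numLeaves]
    rcases he with ((h | h) | h) | rfl
    · have := Finset.mem_Ioc.1 (iha h hx); omega
    · have := Finset.mem_Ioc.1 (ihb h hx); omega
    · have := Finset.mem_Ioc.1 (ihc h hx); omega
    · have := Finset.mem_Ioc.1 (distLeaf_mem_Ioc o a)
      have := Finset.mem_Ioc.1 (distLeaf_mem_Ioc (o + a.numLeaves + b.numLeaves) c)
      simp only [Finset.mem_insert, Finset.mem_singleton] at hx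
      omega

theorem eq_of_mem_rootedMatching_leaf {o x y : ℕ} (hxy : x < y)
    (h : ({x, y} : Finset ℕ) ∈ rootedMatching o leaf) : x = o := by
  simp only [rootedMatching, matchAux, distLeaf, Finset.empty_union, Finset.mem_singleton] at h
  exact (Finset.eq_and_eq_of_pair_eq_pair hxy (by omega) h).1

theorem mem_rootedMatching_node {a b c : TernaryTree} {o x y : ℕ} (hxy : x < y)
    (h : ({x, y} : Finset ℕ) ∈ rootedMatching o (node a b c)) :
    (({x, y} : Finset ℕ) ∈ rootedMatching o a ∧ o < x ∧ y ≤ o + a.numLeaves) ∨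
    (({x, y} : Finset ℕ) ∈ rootedMatching (o + a.numLeaves) b ∧
      o + a.numLeaves < x ∧ y ≤ o + a.numLeaves + b.numLeaves) ∨
    (({x, y} : Finset ℕ) ∈ rootedMatching (o + a.numLeaves + b.numLeaves) c ∧
      o + a.numLeaves + b.numLeaves < x ∧ y ≤ o + a.numLeaves + b.numLeaves + c.numLeaves) ∨
    (({o + a.numLeaves, y} : Finset ℕ) ∈ rootedMatching (o + a.numLeaves) b ∧
      x = o ∧ o + a.numLeaves < y ∧ y ≤ o + a.numLeaves + b.numLeaves) ∨
    (x = distLeaf o a ∧ ({o, x} : Finset ℕ) ∈ rootedMatching o a ∧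
      ({o + a.numLeaves + b.numLeaves, y} : Finset ℕ) ∈
        rootedMatching (o + a.numLeaves + b.numLeaves) c ∧
      o < x ∧ x ≤ o + a.numLeaves ∧
      o + a.numLeaves + b.numLeaves < y ∧ y ≤ o + a.numLeaves + b.numLeaves + c.numLeaves) := by
  have bounds {o' : ℕ} {T : TernaryTree} (h : ({x, y} : Finset ℕ) ∈ matchAux o' T) :
      o' < x ∧ y ≤ o' + T.numLeaves :=
    ⟨(Finset.mem_Ioc.1 (mem_Ioc_of_mem_matchAux h (by simp))).1,
      (Finset.mem_Ioc.1 (mem_Ioc_of_mem_matchAux h (by simp))).2⟩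
  have hfa := Finset.mem_Ioc.1 (distLeaf_mem_Ioc o a)
  have hfb := Finset.mem_Ioc.1 (distLeaf_mem_Ioc (o + a.numLeaves) b)
  have hfc := Finset.mem_Ioc.1 (distLeaf_mem_Ioc (o + a.numLeaves + b.numLeaves) c)
  simp only [rootedMatching, matchAux, distLeaf, Finset.mem_union, Finset.mem_singleton] at h
  rcases h with (((hA | hB) | hC) | hBridge) | hRoot
  · exact .inl ⟨mem_rootedMatching_of_mem_matchAux hA, bounds hA⟩
  · exact .inr <| .inl ⟨mem_rootedMatching_of_mem_matchAux hB, bounds hB⟩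
  · exact .inr <| .inr <| .inl ⟨mem_rootedMatching_of_mem_matchAux hC, bounds hC⟩
  · obtain ⟨rfl, rfl⟩ := Finset.eq_and_eq_of_pair_eq_pair hxy (by omega) hBridge
    exact .inr <| .inr <| .inr <| .inr
      ⟨rfl, root_mem_rootedMatching _ _, root_mem_rootedMatching _ _, by omega, by omega, by omega,
        by omega⟩
  · obtain ⟨rfl, rfl⟩ := Finset.eq_and_eq_of_pair_eq_pair hxy (by omega) hRoot
    exact .inr <| .inr <| .inr <| .inl ⟨root_mem_rootedMatching _ _, rfl, by omega, by omega⟩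

def ContainsPattern (M : Finset (Finset ℕ)) : Prop :=
  ∃ a₁ a₂ a₃ a₄ a₅ a₆ a₇ a₈ : ℕ,
    a₁ < a₂ ∧ a₂ < a₃ ∧ a₃ < a₄ ∧ a₄ < a₅ ∧ a₅ < a₆ ∧ a₆ < a₇ ∧ a₇ < a₈ ∧
    ({a₁, a₄} : Finset ℕ) ∈ M ∧ ({a₅, a₈} : Finset ℕ) ∈ M ∧
    ({a₂, a₇} : Finset ℕ) ∈ M ∧ ({a₃, a₆} : Finset ℕ) ∈ M

def ContainsRotatedPattern (M : Finset (Finset ℕ)) : Prop :=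
  ∃ b₁ b₂ b₃ b₄ b₅ b₆ b₇ b₈ : ℕ,
    b₁ < b₂ ∧ b₂ < b₃ ∧ b₃ < b₄ ∧ b₄ < b₅ ∧ b₅ < b₆ ∧ b₆ < b₇ ∧ b₇ < b₈ ∧
    ({b₁, b₆} : Finset ℕ) ∈ M ∧ ({b₂, b₅} : Finset ℕ) ∈ M ∧
    ({b₃, b₈} : Finset ℕ) ∈ M ∧ ({b₄, b₇} : Finset ℕ) ∈ M

theorem not_containsPattern_leaf (o : ℕ) : ¬ ContainsPattern (rootedMatching o leaf) := by
  rintro ⟨a₁, a₂, a₃, a₄, a₅, a₆, a₇, a₈, h₁₂, h₂₃, h₃₄, h₄₅, h₅₆, h₆₇, h₇₈, m₁₄, m₅₈, -, -⟩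
  have := eq_of_mem_rootedMatching_leaf (by omega) m₁₄
  have := eq_of_mem_rootedMatching_leaf (by omega) m₅₈
  omega

theorem not_containsRotatedPattern_leaf (o : ℕ) :
    ¬ ContainsRotatedPattern (rootedMatching o leaf) := by
  rintro ⟨b₁, b₂, b₃, b₄, b₅, b₆, b₇, b₈, h₁₂, h₂₃, h₃₄, h₄₅, h₅₆, h₆₇, h₇₈, m₁₆, m₂₅, -, -⟩
  have := eq_of_mem_rootedMatching_leaf (by omega) m₁₆
  have := eq_of_mem_rootedMatching_leaf (by omega) m₂₅
  omega

variable {a b c : TernaryTree}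

theorem not_containsPattern_node
    (ha : ∀ o, ¬ ContainsPattern (rootedMatching o a))
    (ha' : ∀ o, ¬ ContainsRotatedPattern (rootedMatching o a))
    (hb : ∀ o, ¬ ContainsPattern (rootedMatching o b))
    (hc : ∀ o, ¬ ContainsPattern (rootedMatching o c)) (o : ℕ) :
    ¬ ContainsPattern (rootedMatching o (node a b c)) := by
  rintro ⟨a₁, a₂, a₃, a₄, a₅, a₆, a₇, a₈, h₁₂, h₂₃, h₃₄, h₄₅, h₅₆, h₆₇, h₇₈, m₁₄, m₅₈, m₂₇, m₃₆⟩
  rcases mem_rootedMatching_node (show a₁ < a₄ by omega) m₁₄ with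
    ⟨hA₁, _, _⟩ | ⟨hB₁, _, _⟩ | ⟨hC₁, _, _⟩ | ⟨hR₁, _, _, _⟩ | ⟨_, -, hE₁, _, _, _, _⟩ <;>
  rcases mem_rootedMatching_node (show a₅ < a₈ by omega) m₅₈ with
    ⟨hA₂, _, _⟩ | ⟨hB₂, _, _⟩ | ⟨hC₂, _, _⟩ | ⟨-, _, _, _⟩ | ⟨_, hE₂, -, _, _, _, _⟩ <;>
  rcases mem_rootedMatching_node (show a₂ < a₇ by omega) m₂₇ with
    ⟨hA₃, _, _⟩ | ⟨hB₃, _, _⟩ | ⟨hC₃, _, _⟩ | ⟨-, _, _, _⟩ | ⟨_, -, -, _, _, _, _⟩ <;>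
  rcases mem_rootedMatching_node (show a₃ < a₆ by omega) m₃₆ with
    ⟨hA₄, _, _⟩ | ⟨hB₄, _, _⟩ | ⟨hC₄, _, _⟩ | ⟨-, _, _, _⟩ | ⟨_, -, -, _, _, _, _⟩ <;>
  try omega
  · exact ha o ⟨a₁, a₂, a₃, a₄, a₅, a₆, a₇, a₈, h₁₂, h₂₃, h₃₄, h₄₅, h₅₆, h₆₇, h₇₈,
      hA₁, hA₂, hA₃, hA₄⟩
  · exact ha' o ⟨o, a₁, a₂, a₃, a₄, a₅, a₆, a₇, by omega, h₁₂, h₂₃, h₃₄, h₄₅, h₅₆, h₆₇,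
      hE₂, hA₁, hA₃, hA₄⟩
  · exact hb _ ⟨a₁, a₂, a₃, a₄, a₅, a₆, a₇, a₈, h₁₂, h₂₃, h₃₄, h₄₅, h₅₆, h₆₇, h₇₈,
      hB₁, hB₂, hB₃, hB₄⟩
  · exact hc _ ⟨a₁, a₂, a₃, a₄, a₅, a₆, a₇, a₈, h₁₂, h₂₃, h₃₄, h₄₅, h₅₆, h₆₇, h₇₈,
      hC₁, hC₂, hC₃, hC₄⟩
  · exact hb _ ⟨_, a₂, a₃, a₄, a₅, a₆, a₇, a₈, by omega, h₂₃, h₃₄, h₄₅, h₅₆, h₆₇, h₇₈,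
      hR₁, hB₂, hB₃, hB₄⟩
  · exact hc _ ⟨_, a₂, a₃, a₄, a₅, a₆, a₇, a₈, by omega, h₂₃, h₃₄, h₄₅, h₅₆, h₆₇, h₇₈,
      hE₁, hC₂, hC₃, hC₄⟩

theorem not_containsRotatedPattern_node
    (ha : ∀ o, ¬ ContainsPattern (rootedMatching o a))
    (ha' : ∀ o, ¬ ContainsRotatedPattern (rootedMatching o a))
    (hb : ∀ o, ¬ ContainsRotatedPattern (rootedMatching o b))
    (hc : ∀ o, ¬ ContainsRotatedPattern (rootedMatching o c)) (o : ℕ) :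
    ¬ ContainsRotatedPattern (rootedMatching o (node a b c)) := by
  rintro ⟨b₁, b₂, b₃, b₄, b₅, b₆, b₇, b₈, h₁₂, h₂₃, h₃₄, h₄₅, h₅₆, h₆₇, h₇₈, m₁₆, m₂₅, m₃₈, m₄₇⟩
  rcases mem_rootedMatching_node (show b₁ < b₆ by omega) m₁₆ with
    ⟨hA₁, _, _⟩ | ⟨hB₁, _, _⟩ | ⟨hC₁, _, _⟩ | ⟨hR₁, _, _, _⟩ | ⟨_, -, hE₁, _, _, _, _⟩ <;>
  rcases mem_rootedMatching_node (show b₂ < b₅ by omega) m₂₅ with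
    ⟨hA₂, _, _⟩ | ⟨hB₂, _, _⟩ | ⟨hC₂, _, _⟩ | ⟨-, _, _, _⟩ | ⟨_, -, -, _, _, _, _⟩ <;>
  rcases mem_rootedMatching_node (show b₃ < b₈ by omega) m₃₈ with
    ⟨hA₃, _, _⟩ | ⟨hB₃, _, _⟩ | ⟨hC₃, _, _⟩ | ⟨-, _, _, _⟩ | ⟨_, hE₃, -, _, _, _, _⟩ <;>
  rcases mem_rootedMatching_node (show b₄ < b₇ by omega) m₄₇ with
    ⟨hA₄, _, _⟩ | ⟨hB₄, _, _⟩ | ⟨hC₄, _, _⟩ | ⟨-, _, _, _⟩ | ⟨_, -, -, _, _, _, _⟩ <;>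
  try omega
  · exact ha' o ⟨b₁, b₂, b₃, b₄, b₅, b₆, b₇, b₈, h₁₂, h₂₃, h₃₄, h₄₅, h₅₆, h₆₇, h₇₈,
      hA₁, hA₂, hA₃, hA₄⟩
  · exact ha o ⟨o, b₁, b₂, b₃, b₄, b₅, b₆, b₇, by omega, h₁₂, h₂₃, h₃₄, h₄₅, h₅₆, h₆₇,
      hE₃, hA₄, hA₁, hA₂⟩
  · exact hb _ ⟨b₁, b₂, b₃, b₄, b₅, b₆, b₇, b₈, h₁₂, h₂₃, h₃₄, h₄₅, h₅₆, h₆₇, h₇₈,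
      hB₁, hB₂, hB₃, hB₄⟩
  · exact hc _ ⟨b₁, b₂, b₃, b₄, b₅, b₆, b₇, b₈, h₁₂, h₂₃, h₃₄, h₄₅, h₅₆, h₆₇, h₇₈,
      hC₁, hC₂, hC₃, hC₄⟩
  · exact hb _ ⟨_, b₂, b₃, b₄, b₅, b₆, b₇, b₈, by omega, h₂₃, h₃₄, h₄₅, h₅₆, h₆₇, h₇₈,
      hR₁, hB₂, hB₃, hB₄⟩
  · exact hc _ ⟨_, b₂, b₃, b₄, b₅, b₆, b₇, b₈, by omega, h₂₃, h₃₄, h₄₅, h₅₆, h₆₇, h₇₈,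
      hE₁, hC₂, hC₃, hC₄⟩

theorem not_containsPattern_and_not_containsRotatedPattern (T : TernaryTree) (o : ℕ) :
    ¬ ContainsPattern (rootedMatching o T) ∧ ¬ ContainsRotatedPattern (rootedMatching o T) := by
  induction T generalizing o with
  | leaf => exact ⟨not_containsPattern_leaf o, not_containsRotatedPattern_leaf o⟩
  | node a b c iha ihb ihc =>
    exact ⟨not_containsPattern_node (iha · |>.1) (iha · |>.2) (ihb · |>.1) (ihc · |>.1) o,
      not_containsRotatedPattern_node (iha · |>.1) (iha · |>.2) (ihb · |>.2) (ihc · |>.2) o⟩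

end TernaryTree

theorem jonesMatching_avoids_pattern (T : TernaryTree) :
    ¬ ∃ a₁ a₂ a₃ a₄ a₅ a₆ a₇ a₈ : ℕ,
      a₁ < a₂ ∧ a₂ < a₃ ∧ a₃ < a₄ ∧ a₄ < a₅ ∧ a₅ < a₆ ∧ a₆ < a₇ ∧ a₇ < a₈ ∧
      ({a₁, a₄} : Finset ℕ) ∈ T.jonesMatching ∧
      ({a₅, a₈} : Finset ℕ) ∈ T.jonesMatching ∧
      ({a₂, a₇} : Finset ℕ) ∈ T.jonesMatching ∧
      ({a₃, a₆} : Finset ℕ) ∈ T.jonesMatching :=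
  (TernaryTree.not_containsPattern_and_not_containsRotatedPattern T 0).1
end

section
/- For a rooted planar ternary tree T with n internal vertices, the number of crossings of its Jones matching M(T) is exactly n, where a crossing is an unordered pair of pairs {a,c}, {b,d} of M(T) with a < b < c < d. -/
namespace JonesAux
open TernaryTree
open scoped Classical

def Cross (p q : Finset ℕ) : Prop :=
  ∃ a b c d : ℕ, a < b ∧ b < c ∧ c < d ∧ p = {a, c} ∧ q = {b, d}

def Strad (f : ℕ) (p : Finset ℕ) : Prop :=
  ∃ x y : ℕ, x < f ∧ f < y ∧ p = {x, y}

noncomputable def cc (M : Finset (Finset ℕ)) : ℕ :=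
  ∑ p ∈ M, ∑ q ∈ M, if Cross p q then 1 else 0

noncomputable def mix (M N : Finset (Finset ℕ)) : ℕ :=
  ∑ p ∈ M, ∑ q ∈ N, if Cross p q then 1 else 0

noncomputable def sc (M : Finset (Finset ℕ)) (f : ℕ) : ℕ :=
  ∑ p ∈ M, if Strad f p then 1 else 0

lemma pair_inj {x y a c : ℕ} (hxy : x < y) (hac : a < c)
    (h : ({x, y} : Finset ℕ) = {a, c}) : x = a ∧ y = c := by
  have h1 : x ∈ ({a, c} : Finset ℕ) := by rw [← h]; simp
  have h2 : y ∈ ({a, c} : Finset ℕ) := by rw [← h]; simp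
  have h3 : a ∈ ({x, y} : Finset ℕ) := by rw [h]; simp
  have h4 : c ∈ ({x, y} : Finset ℕ) := by rw [h]; simp
  simp only [Finset.mem_insert, Finset.mem_singleton] at h1 h2 h3 h4
  omega

lemma cross_iff {x y u v : ℕ} (hxy : x < y) (huv : u < v) :
    Cross {x, y} {u, v} ↔ x < u ∧ u < y ∧ y < v := by
  constructor
  · rintro ⟨a, b, c, d, hab, hbc, hcd, h1, h2⟩
    obtain ⟨rfl, rfl⟩ := pair_inj hxy (show a < c by omega) h1
    obtain ⟨rfl, rfl⟩ := pair_inj huv (show b < d by omega) h2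
    exact ⟨hab, hbc, hcd⟩
  · rintro ⟨h1, h2, h3⟩
    exact ⟨x, u, y, v, h1, h2, h3, rfl, rfl⟩

lemma strad_iff {x y f : ℕ} (hxy : x < y) :
    Strad f {x, y} ↔ x < f ∧ f < y := by
  constructor
  · rintro ⟨u, v, h1, h2, h3⟩
    obtain ⟨rfl, rfl⟩ := pair_inj hxy (show u < v by omega) h3
    exact ⟨h1, h2⟩
  · rintro ⟨h1, h2⟩
    exact ⟨x, y, h1, h2, rfl⟩

lemma not_cross_self (p : Finset ℕ) : ¬ Cross p p := by
  rintro ⟨a, b, c, d, hab, hbc, hcd, h1, h2⟩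
  rw [h1] at h2
  have hb : b ∈ ({a, c} : Finset ℕ) := by rw [h2]; simp
  have ha : a ∈ ({b, d} : Finset ℕ) := by rw [← h2]; simp
  simp only [Finset.mem_insert, Finset.mem_singleton] at hb ha
  omega

lemma mix_union_left {M N P : Finset (Finset ℕ)} (h : Disjoint M N) :
    mix (M ∪ N) P = mix M P + mix N P := Finset.sum_union h

lemma mix_union_right {M N P : Finset (Finset ℕ)} (h : Disjoint M N) :
    mix P (M ∪ N) = mix P M + mix P N := by
  unfold mix
  rw [← Finset.sum_add_distrib]
  exact Finset.sum_congr rfl fun p _ => Finset.sum_union h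

lemma cc_union {M N : Finset (Finset ℕ)} (h : Disjoint M N) :
    cc (M ∪ N) = cc M + cc N + mix M N + mix N M := by
  unfold cc
  rw [Finset.sum_union h]
  have e1 : ∀ p : Finset ℕ, (∑ q ∈ M ∪ N, if Cross p q then 1 else 0) =
      ((∑ q ∈ M, if Cross p q then 1 else 0) + ∑ q ∈ N, if Cross p q then 1 else 0 : ℕ) :=
    fun p => Finset.sum_union h
  simp_rw [e1]
  rw [Finset.sum_add_distrib, Finset.sum_add_distrib]
  unfold mix
  ring

lemma sc_union {M N : Finset (Finset ℕ)} {f : ℕ} (h : Disjoint M N) :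
    sc (M ∪ N) f = sc M f + sc N f := Finset.sum_union h

lemma mix_singleton_right {M : Finset (Finset ℕ)} {q : Finset ℕ} :
    mix M {q} = ∑ p ∈ M, if Cross p q then 1 else 0 := by
  simp only [mix, Finset.sum_singleton]

lemma mix_singleton_left {M : Finset (Finset ℕ)} {q : Finset ℕ} :
    mix {q} M = ∑ p ∈ M, if Cross q p then 1 else 0 := by
  simp only [mix, Finset.sum_singleton]

lemma cc_singleton {q : Finset ℕ} : cc {q} = 0 := by
  simp only [cc, Finset.sum_singleton, if_neg (not_cross_self q)]

lemma sc_singleton {q : Finset ℕ} {f : ℕ} :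
    sc {q} f = if Strad f q then 1 else 0 := by
  simp only [sc, Finset.sum_singleton]

lemma mix_eq_zero {M N : Finset (Finset ℕ)} (h : ∀ p ∈ M, ∀ q ∈ N, ¬ Cross p q) :
    mix M N = 0 :=
  Finset.sum_eq_zero fun p hp => Finset.sum_eq_zero fun q hq => if_neg (h p hp q hq)

lemma distLeaf_bounds : ∀ (T : TernaryTree) (o : ℕ),
    o < distLeaf o T ∧ distLeaf o T ≤ o + T.numLeaves := by
  intro T
  induction T with
  | leaf => intro o; simp [distLeaf, numLeaves]
  | node a b c iha ihb ihc =>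
      intro o
      have := ihb (o + a.numLeaves)
      simp only [distLeaf, numLeaves]
      omega

lemma matchAux_bounds : ∀ (T : TernaryTree) (o : ℕ) (p : Finset ℕ), p ∈ matchAux o T →
    ∀ x ∈ p, o < x ∧ x ≤ o + T.numLeaves := by
  intro T
  induction T with
  | leaf => intro o p hp; simp [matchAux] at hp
  | node a b c iha ihb ihc =>
      intro o p hp x hx
      simp only [matchAux, Finset.mem_union, Finset.mem_singleton] at hp
      simp only [numLeaves]
      rcases hp with ((hp | hp) | hp) | hp
      · have := iha o p hp x hx; omega
      · have := ihb _ p hp x hx; omega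
      · have := ihc _ p hp x hx; omega
      · subst hp
        have h1 := distLeaf_bounds a o
        have h2 := distLeaf_bounds c (o + a.numLeaves + b.numLeaves)
        simp only [Finset.mem_insert, Finset.mem_singleton] at hx
        omega

lemma matchAux_shape : ∀ (T : TernaryTree) (o : ℕ) (p : Finset ℕ), p ∈ matchAux o T →
    ∃ x y : ℕ, x < y ∧ p = {x, y} := by
  intro T
  induction T with
  | leaf => intro o p hp; simp [matchAux] at hp
  | node a b c iha ihb ihc =>
      intro o p hp
      simp only [matchAux, Finset.mem_union, Finset.mem_singleton] at hp
      rcases hp with ((hp | hp) | hp) | hp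
      · exact iha _ _ hp
      · exact ihb _ _ hp
      · exact ihc _ _ hp
      · refine ⟨_, _, ?_, hp⟩
        have h1 := distLeaf_bounds a o
        have h2 := distLeaf_bounds c (o + a.numLeaves + b.numLeaves)
        omega

lemma key : ∀ (T : TernaryTree) (o : ℕ),
    cc (matchAux o T) + sc (matchAux o T) (distLeaf o T) = T.numInternal := by
  intro T
  induction T with
  | leaf => intro o; simp [matchAux, numInternal, cc, sc]
  | node A B C ihA ihB ihC =>
    intro o
    simp only [matchAux, numInternal, distLeaf]
    set LA := A.numLeaves with hLA
    set LB := B.numLeaves with hLB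
    set MA := matchAux o A with hMA
    set MB := matchAux (o + LA) B with hMB
    set MC := matchAux (o + LA + LB) C with hMC
    set fA := distLeaf o A with hfA
    set fB := distLeaf (o + LA) B with hfB
    set fC := distLeaf (o + LA + LB) C with hfC
    have bA : ∀ p ∈ MA, ∀ x ∈ p, o < x ∧ x ≤ o + LA :=
      fun p hp x hx => matchAux_bounds A o p hp x hx
    have bB : ∀ p ∈ MB, ∀ x ∈ p, o + LA < x ∧ x ≤ o + LA + LB :=
      fun p hp x hx => matchAux_bounds B (o + LA) p hp x hx
    have bC : ∀ p ∈ MC, ∀ x ∈ p, o + LA + LB < x :=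
      fun p hp x hx => (matchAux_bounds C (o + LA + LB) p hp x hx).1
    have dfA : o < fA ∧ fA ≤ o + LA := distLeaf_bounds A o
    have dfB : o + LA < fB ∧ fB ≤ o + LA + LB := distLeaf_bounds B (o + LA)
    have dfC : o + LA + LB < fC := (distLeaf_bounds C (o + LA + LB)).1
    have shA : ∀ p ∈ MA, ∃ x y : ℕ, x < y ∧ p = {x, y} :=
      fun p hp => matchAux_shape A o p hp
    have shB : ∀ p ∈ MB, ∃ x y : ℕ, x < y ∧ p = {x, y} :=
      fun p hp => matchAux_shape B (o + LA) p hp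
    have shC : ∀ p ∈ MC, ∃ x y : ℕ, x < y ∧ p = {x, y} :=
      fun p hp => matchAux_shape C (o + LA + LB) p hp
    have hfAC : fA < fC := by omega
    -- disjointness
    have dAB : Disjoint MA MB := by
      rw [Finset.disjoint_left]
      intro p hpA hpB
      obtain ⟨x, y, hxy, rfl⟩ := shA p hpA
      have h1 := (bA _ hpA x (by simp)).2
      have h2 := (bB _ hpB x (by simp)).1
      omega
    have dAC : Disjoint MA MC := by
      rw [Finset.disjoint_left]
      intro p hpA hpC
      obtain ⟨x, y, hxy, rfl⟩ := shA p hpA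
      have h1 := (bA _ hpA x (by simp)).2
      have h2 := bC _ hpC x (by simp)
      omega
    have dBC : Disjoint MB MC := by
      rw [Finset.disjoint_left]
      intro p hpB hpC
      obtain ⟨x, y, hxy, rfl⟩ := shB p hpB
      have h1 := (bB _ hpB x (by simp)).2
      have h2 := bC _ hpC x (by simp)
      omega
    have hp0A : ({fA, fC} : Finset ℕ) ∉ MA := by
      intro h
      have := (bA _ h fC (by simp)).2
      omega
    have hp0B : ({fA, fC} : Finset ℕ) ∉ MB := by
      intro h
      have := (bB _ h fA (by simp)).1
      omega
    have hp0C : ({fA, fC} : Finset ℕ) ∉ MC := by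
      intro h
      have := bC _ h fA (by simp)
      omega
    have dAB_C : Disjoint (MA ∪ MB) MC := Finset.disjoint_union_left.mpr ⟨dAC, dBC⟩
    have dU3p0 : Disjoint (MA ∪ MB ∪ MC) {({fA, fC} : Finset ℕ)} := by
      rw [Finset.disjoint_singleton_right]
      simp only [Finset.mem_union]
      push_neg
      exact ⟨⟨hp0A, hp0B⟩, hp0C⟩
    -- mixed terms between components are zero
    have mABz : mix MA MB = 0 := by
      apply mix_eq_zero; intro p hp q hq
      obtain ⟨x, y, hxy, rfl⟩ := shA p hp
      obtain ⟨u, v, huv, rfl⟩ := shB q hq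
      rw [cross_iff hxy huv]
      have h1 := (bA _ hp y (by simp)).2
      have h2 := (bB _ hq u (by simp)).1
      omega
    have mBAz : mix MB MA = 0 := by
      apply mix_eq_zero; intro p hp q hq
      obtain ⟨u, v, huv, rfl⟩ := shB p hp
      obtain ⟨x, y, hxy, rfl⟩ := shA q hq
      rw [cross_iff huv hxy]
      have h1 := (bA _ hq y (by simp)).2
      have h2 := (bB _ hp u (by simp)).1
      omega
    have mACz : mix MA MC = 0 := by
      apply mix_eq_zero; intro p hp q hq
      obtain ⟨x, y, hxy, rfl⟩ := shA p hp
      obtain ⟨u, v, huv, rfl⟩ := shC q hq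
      rw [cross_iff hxy huv]
      have h1 := (bA _ hp y (by simp)).2
      have h2 := bC _ hq u (by simp)
      omega
    have mCAz : mix MC MA = 0 := by
      apply mix_eq_zero; intro p hp q hq
      obtain ⟨u, v, huv, rfl⟩ := shC p hp
      obtain ⟨x, y, hxy, rfl⟩ := shA q hq
      rw [cross_iff huv hxy]
      have h1 := (bA _ hq y (by simp)).2
      have h2 := bC _ hp u (by simp)
      omega
    have mBCz : mix MB MC = 0 := by
      apply mix_eq_zero; intro p hp q hq
      obtain ⟨x, y, hxy, rfl⟩ := shB p hp
      obtain ⟨u, v, huv, rfl⟩ := shC q hq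
      rw [cross_iff hxy huv]
      have h1 := (bB _ hp y (by simp)).2
      have h2 := bC _ hq u (by simp)
      omega
    have mCBz : mix MC MB = 0 := by
      apply mix_eq_zero; intro p hp q hq
      obtain ⟨u, v, huv, rfl⟩ := shC p hp
      obtain ⟨x, y, hxy, rfl⟩ := shB q hq
      rw [cross_iff huv hxy]
      have h1 := (bB _ hq y (by simp)).2
      have h2 := bC _ hp u (by simp)
      omega
    -- mixed terms with the new pair
    have mAp0 : mix MA {({fA, fC} : Finset ℕ)} = sc MA fA := by
      rw [mix_singleton_right]
      unfold sc
      apply Finset.sum_congr rfl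
      intro p hp
      obtain ⟨x, y, hxy, rfl⟩ := shA p hp
      have hy := (bA _ hp y (by simp)).2
      rw [cross_iff hxy hfAC, strad_iff hxy]
      have h : (x < fA ∧ fA < y ∧ y < fC) ↔ (x < fA ∧ fA < y) := by omega
      rw [h]
    have mp0A : mix {({fA, fC} : Finset ℕ)} MA = 0 := by
      rw [mix_singleton_left]
      apply Finset.sum_eq_zero
      intro p hp
      obtain ⟨x, y, hxy, rfl⟩ := shA p hp
      have hy := (bA _ hp y (by simp)).2
      rw [cross_iff hfAC hxy]
      exact if_neg (by omega)
    have mBp0 : mix MB {({fA, fC} : Finset ℕ)} = 0 := by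
      rw [mix_singleton_right]
      apply Finset.sum_eq_zero
      intro p hp
      obtain ⟨x, y, hxy, rfl⟩ := shB p hp
      have hx := (bB _ hp x (by simp)).1
      rw [cross_iff hxy hfAC]
      exact if_neg (by omega)
    have mp0B : mix {({fA, fC} : Finset ℕ)} MB = 0 := by
      rw [mix_singleton_left]
      apply Finset.sum_eq_zero
      intro p hp
      obtain ⟨x, y, hxy, rfl⟩ := shB p hp
      have hy := (bB _ hp y (by simp)).2
      rw [cross_iff hfAC hxy]
      exact if_neg (by omega)
    have mCp0 : mix MC {({fA, fC} : Finset ℕ)} = 0 := by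
      rw [mix_singleton_right]
      apply Finset.sum_eq_zero
      intro p hp
      obtain ⟨x, y, hxy, rfl⟩ := shC p hp
      have hx := bC _ hp x (by simp)
      rw [cross_iff hxy hfAC]
      exact if_neg (by omega)
    have mp0C : mix {({fA, fC} : Finset ℕ)} MC = sc MC fC := by
      rw [mix_singleton_left]
      unfold sc
      apply Finset.sum_congr rfl
      intro p hp
      obtain ⟨x, y, hxy, rfl⟩ := shC p hp
      have hx := bC _ hp x (by simp)
      rw [cross_iff hfAC hxy, strad_iff hxy]
      have h : (fA < x ∧ x < fC ∧ fC < y) ↔ (x < fC ∧ fC < y) := by omega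
      rw [h]
    -- straddle counts for fB
    have scA0 : sc MA fB = 0 := by
      apply Finset.sum_eq_zero
      intro p hp
      obtain ⟨x, y, hxy, rfl⟩ := shA p hp
      have hy := (bA _ hp y (by simp)).2
      rw [strad_iff hxy]
      exact if_neg (by omega)
    have scC0 : sc MC fB = 0 := by
      apply Finset.sum_eq_zero
      intro p hp
      obtain ⟨x, y, hxy, rfl⟩ := shC p hp
      have hx := bC _ hp x (by simp)
      rw [strad_iff hxy]
      exact if_neg (by omega)
    have scp0 : sc {({fA, fC} : Finset ℕ)} fB = 1 := by
      rw [sc_singleton, if_pos ⟨fA, fC, by omega, by omega, rfl⟩]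
    -- assemble
    have iA := ihA o
    have iB := ihB (o + LA)
    have iC := ihC (o + LA + LB)
    rw [← hMA, ← hfA] at iA
    rw [← hMB, ← hfB] at iB
    rw [← hMC, ← hfC] at iC
    rw [cc_union dU3p0, cc_union dAB_C, cc_union dAB,
        sc_union dU3p0, sc_union dAB_C, sc_union dAB,
        mix_union_left dAB_C, mix_union_left dAB,
        mix_union_right dAB_C, mix_union_right dAB,
        mix_union_left dAB, mix_union_right dAB,
        cc_singleton, scp0, scA0, scC0,
        mABz, mBAz, mACz, mCAz, mBCz, mCBz,
        mAp0, mp0A, mBp0, mp0B, mCp0, mp0C]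
    omega

lemma jones_cc (T : TernaryTree) : cc T.jonesMatching = T.numInternal := by
  unfold jonesMatching
  have hf : 0 < distLeaf 0 T := (distLeaf_bounds T 0).1
  have hnotin : ({0, distLeaf 0 T} : Finset ℕ) ∉ matchAux 0 T := by
    intro h
    have := (matchAux_bounds T 0 _ h 0 (by simp)).1
    omega
  have m1 : mix (matchAux 0 T) {({0, distLeaf 0 T} : Finset ℕ)} = 0 := by
    rw [mix_singleton_right]
    apply Finset.sum_eq_zero
    intro p hp
    obtain ⟨x, y, hxy, rfl⟩ := matchAux_shape T 0 p hp
    rw [cross_iff hxy hf]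
    exact if_neg (by omega)
  have m2 : mix {({0, distLeaf 0 T} : Finset ℕ)} (matchAux 0 T)
      = sc (matchAux 0 T) (distLeaf 0 T) := by
    rw [mix_singleton_left]
    unfold sc
    apply Finset.sum_congr rfl
    intro p hp
    obtain ⟨x, y, hxy, rfl⟩ := matchAux_shape T 0 p hp
    have hx := (matchAux_bounds T 0 _ hp x (by simp)).1
    rw [cross_iff hf hxy, strad_iff hxy]
    have h : (0 < x ∧ x < distLeaf 0 T ∧ distLeaf 0 T < y) ↔
        (x < distLeaf 0 T ∧ distLeaf 0 T < y) := by omega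
    rw [h]
  rw [cc_union (Finset.disjoint_singleton_right.mpr hnotin), cc_singleton, m1, m2]
  have := key T 0
  omega

end JonesAux

open scoped Classical in
theorem jonesMatching_crossings_card (T : TernaryTree) (n : ℕ)
    (hn : T.numInternal = n) :
    ((T.jonesMatching ×ˢ T.jonesMatching).filter (fun e =>
      ∃ a b c d : ℕ, a < b ∧ b < c ∧ c < d ∧
        e.1 = ({a, c} : Finset ℕ) ∧ e.2 = ({b, d} : Finset ℕ))).card = n := by
  classical
  have hcc : ((T.jonesMatching ×ˢ T.jonesMatching).filter (fun e =>
      ∃ a b c d : ℕ, a < b ∧ b < c ∧ c < d ∧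
        e.1 = ({a, c} : Finset ℕ) ∧ e.2 = ({b, d} : Finset ℕ))).card
      = JonesAux.cc T.jonesMatching := by
    rw [Finset.card_filter, Finset.sum_product]
    unfold JonesAux.cc
    apply Finset.sum_congr rfl; intro p _
    apply Finset.sum_congr rfl; intro q _
    simp only [JonesAux.Cross]
    congr
  rw [hcc, JonesAux.jones_cc, hn]
end
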